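/- arXiv:2001.06211 — 8 statements merged into one kernel-verified Lean document; each statement's English description precedes it below -/
import Mathlib

section
/- Let A = L D Lᵀ with L unit lower triangular and D diagonal and all leading principal submatrices of A invertible. Then for all indices i ≥ j, letting ℓ = {1,...,j-1}, one has L(i,j)·D(j,j) = A(i,j) − A(i,ℓ)·A(ℓ,ℓ)^{-1}·A(ℓ,j), i.e., the (i,j) entry of the scaled L-factor equals the corresponding entry of the Schur complement of A(ℓ,ℓ) in A. -/
open Matrix BigOperators Finset

private lemma sum_restrict {M : Type*} [AddCommMonoid M] {n m : ℕ} (hm : m ≤ n)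
    (g : Fin n → M) (hg : ∀ k : Fin n, m ≤ k.val → g k = 0) :
    ∑ k, g k = ∑ b : Fin m, g (Fin.castLE hm b) := by
  classical
  have hsub := Finset.sum_subset
    (Finset.subset_univ ((Finset.univ : Finset (Fin m)).map (Fin.castLEEmb hm)))
    (f := g) ?_
  · rw [← hsub, Finset.sum_map]
    rfl
  · intro x _ hx
    apply hg
    by_contra hcon
    push_neg at hcon
    exact hx (Finset.mem_map.mpr ⟨⟨x.val, hcon⟩, Finset.mem_univ _, Fin.ext rfl⟩)

private lemma leading_all {n : ℕ} (A : Matrix (Fin n) (Fin n) ℂ)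
    (hleading : ∀ i : Fin n,
      IsUnit (A.submatrix (Fin.castLE i.isLt) (Fin.castLE i.isLt)).det)
    (m : ℕ) (hm : m ≤ n) :
    IsUnit (A.submatrix (Fin.castLE hm) (Fin.castLE hm)).det := by
  match m, hm with
  | 0, hm => simp [Matrix.det_fin_zero]
  | (k+1), hm => exact hleading ⟨k, hm⟩

/-- Schur-complement formula for the LDLᵀ factors:
for `i ≥ j`, with `ℓ = {1,…,j−1}`, one has
`L(i,j)·D(j,j) = A(i,j) − A(i,ℓ)·A(ℓ,ℓ)⁻¹·A(ℓ,j)`. -/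
theorem ldlt_factor_schur_complement {n : ℕ} (A L D : Matrix (Fin n) (Fin n) ℂ)
    (hsymm : A.IsSymm)
    (hleading : ∀ i : Fin n,
      IsUnit (A.submatrix (Fin.castLE i.isLt) (Fin.castLE i.isLt)).det)
    (hL_lower : ∀ i j : Fin n, i < j → L i j = 0)
    (hL_diag : ∀ i : Fin n, L i i = 1)
    (hD_diag : ∀ i j : Fin n, i ≠ j → D i j = 0)
    (hfact : A = L * D * Lᵀ) :
    ∀ i j : Fin n, j ≤ i →
      L i j * D j j =
        A i j - ∑ a : Fin j.val, ∑ b : Fin j.val,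
          A i (Fin.castLE j.isLt.le a) *
            (A.submatrix (Fin.castLE j.isLt.le) (Fin.castLE j.isLt.le))⁻¹ a b *
            A (Fin.castLE j.isLt.le b) j := by
  classical
  intro i j hji
  set f : Fin j.val → Fin n := Fin.castLE j.isLt.le with hf
  set B : Matrix (Fin j.val) (Fin j.val) ℂ :=
    A.submatrix (Fin.castLE j.isLt.le) (Fin.castLE j.isLt.le) with hBdef
  set Lm : Matrix (Fin j.val) (Fin j.val) ℂ := L.submatrix f f with hLm
  set d : Fin j.val → ℂ := fun b => D (f b) (f b) with hd
  set Dm : Matrix (Fin j.val) (Fin j.val) ℂ := Matrix.diagonal d with hDm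
  -- entry formula for A
  have hLD : ∀ p x : Fin n, (L * D) p x = L p x * D x x := by
    intro p x
    rw [Matrix.mul_apply, Finset.sum_eq_single x]
    · intro b _ hbx
      rw [hD_diag b x hbx, mul_zero]
    · intro h; exact absurd (Finset.mem_univ x) h
  have hA : ∀ p q : Fin n, A p q = ∑ k, L p k * D k k * L q k := by
    intro p q
    rw [hfact, Matrix.mul_apply]
    simp only [hLD, Matrix.transpose_apply]
  -- lower-triangularity facts
  have hLz : ∀ p k : Fin n, p.val < k.val → L p k = 0 := fun p k h => hL_lower p k h
  -- restricted entry formula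
  have hAres : ∀ (p : Fin n) (q : Fin j.val),
      A p (f q) = ∑ b : Fin j.val, L p (f b) * d b * L (f q) (f b) := by
    intro p q
    rw [hA]
    exact sum_restrict j.isLt.le _ (fun k hk => by
      rw [hLz (f q) k (lt_of_lt_of_le q.isLt hk), mul_zero])
  -- B = Lm * Dm * Lmᵀ
  have hB : B = Lm * Dm * Lmᵀ := by
    ext a b
    have : B a b = A (f a) (f b) := rfl
    rw [this, hAres]
    rw [Matrix.mul_apply]
    apply Finset.sum_congr rfl
    intro c _
    rw [Matrix.mul_diagonal, Matrix.transpose_apply]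
    simp only [hLm, Matrix.submatrix_apply]
  -- invertibility
  have hBu : IsUnit B.det := leading_all A hleading j.val j.isLt.le
  have hLmu : IsUnit Lm.det := by
    have htri : Lm.BlockTriangular (OrderDual.toDual) := by
      intro a b hab
      exact hLz (f a) (f b) hab
    rw [Matrix.det_of_lowerTriangular Lm htri]
    have : ∀ a : Fin j.val, Lm a a = 1 := fun a => hL_diag (f a)
    simp [this]
  have hLmtu : IsUnit Lmᵀ.det := by rwa [Matrix.det_transpose]
  have hDmu : IsUnit Dm.det := by
    have : B.det = Lm.det * Dm.det * Lm.det := by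
      rw [hB, Matrix.det_mul, Matrix.det_mul, Matrix.det_transpose]
    rw [this] at hBu
    exact isUnit_of_mul_isUnit_right (isUnit_of_mul_isUnit_left hBu)
  have hdnz : ∀ b : Fin j.val, d b ≠ 0 := by
    intro b
    rw [hDm, Matrix.det_diagonal] at hDmu
    have := hDmu.ne_zero
    intro hb
    exact this (Finset.prod_eq_zero (Finset.mem_univ b) hb)
  -- B⁻¹ * Lm = Lmᵀ⁻¹ * Dm⁻¹
  have hBinv : B⁻¹ * Lm = Lmᵀ⁻¹ * Dm⁻¹ := by
    rw [hB, Matrix.mul_inv_rev, Matrix.mul_inv_rev, Matrix.mul_assoc, Matrix.mul_assoc,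
      Matrix.nonsing_inv_mul Lm hLmu, Matrix.mul_one]
  -- vectors
  set w : Fin j.val → ℂ := fun b => L i (f b) * d b with hw
  set y : Fin j.val → ℂ := fun b => L j (f b) * d b with hy
  have hv : (fun a => A i (f a)) = Lm *ᵥ w := by
    funext a
    rw [hAres]
    rw [Matrix.mulVec]
    simp only [dotProduct, hLm, Matrix.submatrix_apply, hw]
    apply Finset.sum_congr rfl
    intro b _
    ring
  have hc : (fun b => A (f b) j) = Lm *ᵥ y := by
    funext b
    have hs : A (f b) j = A j (f b) := by
      conv_lhs => rw [← hsymm]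
      rfl
    rw [hs, hAres]
    rw [Matrix.mulVec]
    simp only [dotProduct, hLm, Matrix.submatrix_apply, hy]
    apply Finset.sum_congr rfl
    intro c _
    ring
  -- the double sum
  have hS : (∑ a : Fin j.val, ∑ b : Fin j.val,
        A i (Fin.castLE j.isLt.le a) * B⁻¹ a b * A (Fin.castLE j.isLt.le b) j)
      = (fun a => A i (f a)) ⬝ᵥ (B⁻¹ *ᵥ (fun b => A (f b) j)) := by
    simp only [dotProduct, Matrix.mulVec, Finset.mul_sum]
    apply Finset.sum_congr rfl
    intro a _
    apply Finset.sum_congr rfl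
    intro b _
    ring
  have hS2 : (fun a => A i (f a)) ⬝ᵥ (B⁻¹ *ᵥ (fun b => A (f b) j))
      = ∑ b : Fin j.val, L i (f b) * d b * L j (f b) := by
    rw [hv, hc, Matrix.mulVec_mulVec, hBinv, ← Matrix.mulVec_mulVec]
    have hcomm : (Lm *ᵥ w) ⬝ᵥ (Lmᵀ⁻¹ *ᵥ (Dm⁻¹ *ᵥ y))
        = w ⬝ᵥ (Lmᵀ *ᵥ (Lmᵀ⁻¹ *ᵥ (Dm⁻¹ *ᵥ y))) := by
      rw [dotProduct_comm, Matrix.dotProduct_mulVec, ← Matrix.mulVec_transpose,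
        dotProduct_comm]
    rw [hcomm, Matrix.mulVec_mulVec, Matrix.mul_nonsing_inv Lmᵀ hLmtu, Matrix.one_mulVec]
    have hDinv : Dm⁻¹ = Matrix.diagonal (fun b => (d b)⁻¹) := by
      apply Matrix.inv_eq_right_inv
      rw [hDm, Matrix.diagonal_mul_diagonal]
      have : (fun b => d b * (d b)⁻¹) = fun _ => (1 : ℂ) := by
        funext b
        exact mul_inv_cancel₀ (hdnz b)
      rw [this, Matrix.diagonal_one]
    rw [hDinv]
    simp only [dotProduct, Matrix.mulVec_diagonal, hw, hy]
    apply Finset.sum_congr rfl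
    intro b _
    rw [mul_comm (L j (f b)) (d b), ← mul_assoc ((d b)⁻¹), inv_mul_cancel₀ (hdnz b), one_mul]
  -- expand A i j
  have hAij : A i j = (∑ b : Fin j.val, L i (f b) * d b * L j (f b)) + L i j * D j j := by
    rw [hA]
    have hres := sum_restrict (M := ℂ) j.isLt (fun k => L i k * D k k * L j k) ?_
    · rw [hres, Fin.sum_univ_castSucc]
      have h1 : ∀ b : Fin j.val, Fin.castLE j.isLt b.castSucc = f b := fun b => Fin.ext rfl
      have h2 : Fin.castLE j.isLt (Fin.last j.val) = j := Fin.ext rfl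
      simp only [h1, h2, hL_diag j, mul_one, hd]
    · intro k hk
      have hjk : j < k := hk
      show L i k * D k k * L j k = 0
      rw [hLz j k hjk, mul_zero]
  rw [hS, hS2, hAij]
  ring
end

section
/- Let A be an invertible symmetric matrix with LDLᵀ factorization A = L D Lᵀ, L unit lower triangular, D diagonal. Then for all indices i ≥ j, letting r = {j+1,...,n}, one has A^{-1}(i,j) = D^{-1}(i,j) − A^{-1}(i,r)·L(r,j), where D^{-1}(i,j) = 1/D(j,j) if i = j and 0 otherwise. -/
open Matrix BigOperators Finset

/-- Selected-inversion recursion: for `i ≥ j`, with `r = {j+1,…,n}`,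
`A⁻¹(i,j) = D⁻¹(i,j) − ∑_{k>j} A⁻¹(i,k)·L(k,j)`. -/
theorem selected_inversion_recursion {n : ℕ} (A L D : Matrix (Fin n) (Fin n) ℂ)
    (hsymm : A.IsSymm)
    (hA : IsUnit A.det)
    (hleading : ∀ i : Fin n,
      IsUnit (A.submatrix (Fin.castLE i.isLt) (Fin.castLE i.isLt)).det)
    (hL_lower : ∀ i j : Fin n, i < j → L i j = 0)
    (hL_diag : ∀ i : Fin n, L i i = 1)
    (hD_diag : ∀ i j : Fin n, i ≠ j → D i j = 0)
    (hfact : A = L * D * Lᵀ) :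
    ∀ i j : Fin n, j ≤ i →
      A⁻¹ i j = (if i = j then (D j j)⁻¹ else 0)
        - ∑ k ∈ Finset.univ.filter (fun k : Fin n => j < k), A⁻¹ i k * L k j := by
  intro i j hij
  set d : Fin n → ℂ := fun k => D k k with hd
  have hDdiag : D = Matrix.diagonal d := by
    ext a b
    by_cases h : a = b
    · subst h; simp [Matrix.diagonal, hd]
    · simp [Matrix.diagonal, h, hD_diag a b h]
  have hLdet : L.det = 1 := by
    rw [Matrix.det_of_lowerTriangular L (fun a b h => hL_lower a b h)]
    simp [hL_diag]
  have hLTtri : Lᵀ.BlockTriangular id := fun a b h => hL_lower b a h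
  have hLTdet : Lᵀ.det = 1 := by rw [Matrix.det_transpose]; exact hLdet
  have hDdet : IsUnit D.det := by
    have : A.det = L.det * D.det * Lᵀ.det := by rw [hfact, Matrix.det_mul, Matrix.det_mul]
    rw [hLdet, hLTdet, one_mul, mul_one] at this
    rwa [this] at hA
  have hLunit : IsUnit L.det := by rw [hLdet]; exact isUnit_one
  have hLTunit : IsUnit Lᵀ.det := by rw [hLTdet]; exact isUnit_one
  haveI : Invertible Lᵀ := Lᵀ.invertibleOfIsUnitDet hLTunit
  have hLTinvtri : Lᵀ⁻¹.BlockTriangular id :=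
    Matrix.blockTriangular_inv_of_blockTriangular hLTtri
  -- A⁻¹ * L = Lᵀ⁻¹ * D⁻¹
  have hmul : A⁻¹ * L = Lᵀ⁻¹ * D⁻¹ := by
    rw [hfact, Matrix.mul_inv_rev, Matrix.mul_inv_rev, Matrix.mul_assoc,
      Matrix.mul_assoc, Matrix.nonsing_inv_mul L hLunit, Matrix.mul_one]
  -- D⁻¹ is diagonal
  have hd0 : ∀ k, d k ≠ 0 := by
    intro k
    have hprod : IsUnit (∏ k, d k) := by
      rwa [hDdiag, Matrix.det_diagonal] at hDdet
    have := hprod.ne_zero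
    intro hk
    exact this (Finset.prod_eq_zero (Finset.mem_univ k) hk)
  have hDinv : D⁻¹ = Matrix.diagonal (fun k => (d k)⁻¹) := by
    apply Matrix.inv_eq_right_inv
    rw [hDdiag, Matrix.diagonal_mul_diagonal]
    have : (fun k => d k * (d k)⁻¹) = fun _ => (1 : ℂ) := by
      funext k
      exact mul_inv_cancel₀ (hd0 k)
    rw [this, Matrix.diagonal_one]
  -- diagonal entry of Lᵀ⁻¹
  have hdiagone : Lᵀ⁻¹ j j = 1 := by
    have h1 : (Lᵀ⁻¹ * Lᵀ) j j = 1 := by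
      rw [Matrix.nonsing_inv_mul Lᵀ hLTunit]; simp
    rw [Matrix.mul_apply] at h1
    rw [Finset.sum_eq_single j] at h1
    · simpa [Matrix.transpose_apply, hL_diag] using h1
    · intro k _ hk
      rcases lt_or_gt_of_ne hk with h | h
      · have : Lᵀ⁻¹ j k = 0 := hLTinvtri (show (id k : Fin n) < id j from h)
        rw [this, zero_mul]
      · have : Lᵀ k j = 0 := hL_lower j k h
        rw [this, mul_zero]
    · intro h; exact absurd (Finset.mem_univ j) h
  -- key value of (A⁻¹ * L) i j
  have hkey : (A⁻¹ * L) i j = if i = j then (d j)⁻¹ else 0 := by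
    rw [hmul, hDinv, Matrix.mul_diagonal]
    by_cases h : i = j
    · subst h; simp [hdiagone]
    · have hji : j < i := lt_of_le_of_ne hij (Ne.symm h)
      have : Lᵀ⁻¹ i j = 0 := hLTinvtri (show (id j : Fin n) < id i from hji)
      simp [this, h]
  -- expand (A⁻¹ * L) i j as a sum and split
  have hexp : (A⁻¹ * L) i j
      = (∑ k ∈ Finset.univ.filter (fun k : Fin n => j < k), A⁻¹ i k * L k j)
        + A⁻¹ i j := by
    rw [Matrix.mul_apply, ← Finset.sum_filter_add_sum_filter_not Finset.univ
      (fun k : Fin n => j < k)]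
    congr 1
    rw [Finset.sum_eq_single j]
    · rw [hL_diag, mul_one]
    · intro k hk hkj
      have hk' : ¬ j < k := (Finset.mem_filter.mp hk).2
      have : k < j := lt_of_le_of_ne (not_lt.mp hk') hkj
      rw [hL_lower k j this, mul_zero]
    · intro h
      exact absurd (Finset.mem_filter.mpr ⟨Finset.mem_univ j, lt_irrefl j⟩) h
  have := hexp.symm.trans hkey
  rw [hd] at this
  linear_combination this
end

section
/- Let A be an invertible matrix with factorization A = L D Lᵀ where L is unit lower triangular and D diagonal. Then A^{-1} = L^{-T} D^{-1} + A^{-1}(I − L). -/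
open Matrix BigOperators Finset

/-- For an invertible matrix `A = L D Lᵀ` with `L` unit lower
triangular and `D` diagonal, `A⁻¹ = L⁻ᵀ D⁻¹ + A⁻¹ (I − L)`. -/
theorem inverse_ldlt_identity {n : ℕ} (A L D : Matrix (Fin n) (Fin n) ℂ)
    (hA : IsUnit A.det)
    (hL_lower : ∀ i j : Fin n, i < j → L i j = 0)
    (hL_diag : ∀ i : Fin n, L i i = 1)
    (hD_diag : ∀ i j : Fin n, i ≠ j → D i j = 0)
    (hD_unit : IsUnit D.det)
    (hfact : A = L * D * Lᵀ) :
    A⁻¹ = (Lᵀ)⁻¹ * D⁻¹ + A⁻¹ * (1 - L) := by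
  have hLT : (Lᵀ).BlockTriangular (id : Fin n → Fin n) := by
    intro i j h
    exact hL_lower j i h
  have hLdet : IsUnit L.det := by
    rw [← Matrix.det_transpose, Matrix.det_of_upperTriangular hLT]
    simp [Matrix.transpose_apply, hL_diag]
  have hAinv : A⁻¹ = (Lᵀ)⁻¹ * D⁻¹ * L⁻¹ := by
    rw [hfact, Matrix.mul_inv_rev, Matrix.mul_inv_rev]
    rw [Matrix.mul_assoc]
  have key : A⁻¹ * L = (Lᵀ)⁻¹ * D⁻¹ := by
    rw [hAinv, Matrix.mul_assoc, Matrix.nonsing_inv_mul L hLdet, Matrix.mul_one]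
  rw [Matrix.mul_sub, Matrix.mul_one, key]
  abel
end

section
/- Let G be the graph of a sparse symmetric matrix A with vertices {1,...,n}. Suppose there is a fill path from i to j (a path whose interior vertices are all numbered less than min{i,j}) and a fill path from k to j, with i > k > j. Then there is a fill path from i to k. -/
open Matrix

/-! Reversing the fill path from `k` to `j` (legitimate since `H` is symmetric) and gluing it to the
one from `i` to `j` at `j` gives a path from `i` to `k` whose interior vertices are `j` and
vertices below `j`, all below `k = min i k`. -/

/-- A fill path between `i` and `j` in the graph of a matrix `H` (edges wherever
`H` has a nonzero entry), recorded by its list `l` of interior vertices: all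
interior vertices are smaller than `min i j`. -/
def IsFillPath {n : ℕ} (H : Matrix (Fin n) (Fin n) ℂ) (i j : Fin n)
    (l : List (Fin n)) : Prop :=
  List.Chain' (fun u v : Fin n => H u v ≠ 0) (i :: (l ++ [j])) ∧
    ∀ v ∈ l, v < min i j

namespace IsFillPath

variable {n : ℕ} {H : Matrix (Fin n) (Fin n) ℂ} {i j k : Fin n} {l l₁ l₂ : List (Fin n)}

theorem symm (hH : H.IsSymm) (h : IsFillPath H i j l) : IsFillPath H j i l.reverse := by
  refine ⟨?_, fun v hv => min_comm i j ▸ h.2 v (List.mem_reverse.mp hv)⟩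
  have hrev := List.isChain_reverse.mpr <| h.1.imp fun u v huv => hH.apply u v ▸ huv
  simp only [List.reverse_cons, List.reverse_append, List.cons_append,
    List.append_assoc] at hrev
  exact hrev

theorem append (h₁ : IsFillPath H i j l₁) (h₂ : IsFillPath H j k l₂) (hj : j < min i k) :
    IsFillPath H i k (l₁ ++ j :: l₂) := by
  refine ⟨?_, fun v hv => ?_⟩
  · rw [List.append_assoc, List.cons_append]
    exact List.isChain_cons_split.mpr ⟨h₁.1, h₂.1⟩
  · rw [List.mem_append, List.mem_cons] at hv
    rcases hv with hv | rfl | hv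
    · exact (h₁.2 v hv).trans_le (min_le_right i j) |>.trans hj
    · exact hj
    · exact (h₂.2 v hv).trans_le (min_le_left j k) |>.trans hj

end IsFillPath

/-- If there are fill paths from `i` to `j` and from `k` to `j`
with `i > k > j`, then there is a fill path from `i` to `k`. -/
theorem fill_path_trans {n : ℕ} (H : Matrix (Fin n) (Fin n) ℂ)
    (hsymm : H.IsSymm)
    (i j k : Fin n) (hjk : j < k) (hki : k < i)
    (hij : ∃ l, IsFillPath H i j l) (hkj : ∃ l, IsFillPath H k j l) :
    ∃ l, IsFillPath H i k l := by
  obtain ⟨l₁, h₁⟩ := hij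
  obtain ⟨l₂, h₂⟩ := hkj
  exact ⟨_, h₁.append (h₂.symm hsymm) (lt_min (hjk.trans hki) hjk)⟩
end

section
/- Let H be a Hermitian (or symmetric) n×n matrix whose spectrum is contained in a set 𝓔 ⊂ ℝ, and let f : 𝓔 → ℂ be bounded. For indices i, j, let d(i,j) denote the graph distance between i and j in the graph of H. Then |f(H)(i,j)| ≤ inf over polynomials p of degree at most d(i,j)−1 of sup_{x ∈ 𝓔} |f(x) − p(x)|. -/
/-!
A polynomial `p` of degree below the graph distance `d(i, j)` has `p(H)(i, j) = 0`, since
`(H ^ k)(i, j)` is a sum over walks of length `k` from `i` to `j`. Hence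
`f(H)(i, j) = (f(H) - p(H))(i, j)`, and `f(H) - p(H) = U diag(f(λ) - p(λ)) U*` has operator
norm `max_k |f(λ_k) - p(λ_k)|`, which bounds every entry.
-/

open Matrix

/-- The (simple) graph of a matrix `H`: an edge between distinct `u, v` whenever
`H` has a nonzero entry at `(u,v)` or `(v,u)`. -/
def matGraph {n : ℕ} (H : Matrix (Fin n) (Fin n) ℂ) : SimpleGraph (Fin n) where
  Adj u v := u ≠ v ∧ (H u v ≠ 0 ∨ H v u ≠ 0)
  symm := ⟨fun _ _ h => ⟨h.1.symm, h.2.symm⟩⟩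
  loopless := ⟨fun _ h => h.1 rfl⟩

open scoped Matrix.Norms.L2Operator in
theorem Matrix.norm_apply_le_l2_opNorm {𝕜 m n : Type*} [RCLike 𝕜] [Fintype m] [Fintype n]
    [DecidableEq n] (A : Matrix m n 𝕜) (i : m) (j : n) : ‖A i j‖ ≤ ‖A‖ := by
  set e := EuclideanSpace.single j (1 : 𝕜)
  have hAe : ‖(EuclideanSpace.equiv m 𝕜).symm (A *ᵥ e)‖ ≤ ‖A‖ := by
    simpa [e] using A.l2_opNorm_mulVec e
  have hentry : A i j = (EuclideanSpace.equiv m 𝕜).symm (A *ᵥ e) i := by simp [e]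
  rw [hentry]
  exact (PiLp.norm_apply_le _ _).trans hAe

open scoped Matrix.Norms.L2Operator in
theorem Unitary.norm_conjStarAlgAut_diagonal_apply_le {𝕜 n : Type*} [RCLike 𝕜] [Fintype n]
    [DecidableEq n] (U : unitary (Matrix n n 𝕜)) {v : n → 𝕜} {C : ℝ} (hv : ∀ k, ‖v k‖ ≤ C)
    (i j : n) : ‖conjStarAlgAut 𝕜 _ U (diagonal v) i j‖ ≤ C := by
  have : Nonempty n := ⟨i⟩
  calc ‖conjStarAlgAut 𝕜 _ U (diagonal v) i j‖ ≤ ‖conjStarAlgAut 𝕜 _ U (diagonal v)‖ :=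
        norm_apply_le_l2_opNorm _ i j
    _ = ‖v‖ := by
        rw [conjStarAlgAut_apply, ← coe_star, CStarRing.norm_mul_coe_unitary,
          CStarRing.norm_coe_unitary_mul, l2_opNorm_diagonal]
    _ ≤ C := (pi_norm_le_iff_of_nonempty v).mpr hv

theorem Matrix.IsHermitian.aeval_eq_conjStarAlgAut {𝕜 n : Type*} [RCLike 𝕜] [Fintype n]
    [DecidableEq n] {A : Matrix n n 𝕜} (hA : A.IsHermitian) (p : Polynomial 𝕜) :
    Polynomial.aeval A p = Unitary.conjStarAlgAut 𝕜 _ hA.eigenvectorUnitary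
      (diagonal fun k => p.eval (hA.eigenvalues k : 𝕜)) := by
  conv_lhs => rw [hA.spectral_theorem]
  rw [← StarAlgEquiv.coe_toAlgEquiv, ← AlgEquiv.coe_toAlgHom, Polynomial.aeval_algHom_apply]
  congr 1
  rw [← diagonalAlgHom_apply (R := 𝕜), Polynomial.aeval_algHom_apply, Polynomial.aeval_pi_apply]
  rfl

theorem matGraph.exists_walk_length_le_of_pow_apply_ne_zero {n : ℕ}
    (H : Matrix (Fin n) (Fin n) ℂ) {i j : Fin n} {d : ℕ} (h : (H ^ d) i j ≠ 0) :
    ∃ w : (matGraph H).Walk i j, w.length ≤ d := by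
  induction d generalizing j with
  | zero =>
    obtain rfl : i = j := by
      by_contra hij
      exact h (by rw [pow_zero, one_apply_ne hij])
    exact ⟨.nil, le_rfl⟩
  | succ d ih =>
    rw [pow_succ, mul_apply] at h
    obtain ⟨k, -, hk⟩ := Finset.exists_ne_zero_of_sum_ne_zero h
    obtain ⟨w, hw⟩ := ih (left_ne_zero_of_mul hk)
    by_cases hkj : k = j
    · subst hkj
      exact ⟨w, hw.trans d.le_succ⟩
    · have hadj : (matGraph H).Adj k j := ⟨hkj, .inl (right_ne_zero_of_mul hk)⟩
      refine ⟨w.concat hadj, ?_⟩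
      rw [SimpleGraph.Walk.length_concat]
      omega

theorem matGraph.aeval_apply_eq_zero_of_natDegree_lt {n : ℕ} {H : Matrix (Fin n) (Fin n) ℂ}
    {i j : Fin n} {m : ℕ} (hd : ∀ w : (matGraph H).Walk i j, m ≤ w.length)
    {p : Polynomial ℂ} (hp : p.natDegree < m) : Polynomial.aeval H p i j = 0 := by
  rw [Polynomial.aeval_eq_sum_range' hp, Matrix.sum_apply]
  refine Finset.sum_eq_zero fun d hdm => ?_
  suffices (H ^ d) i j = 0 by rw [Matrix.smul_apply, this, smul_zero]
  by_contra h
  obtain ⟨w, hw⟩ := exists_walk_length_le_of_pow_apply_ne_zero H h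
  exact (hd w).not_gt (hw.trans_lt (Finset.mem_range.mp hdm))

theorem matrix_function_entry_bound_general {n : ℕ} (H : Matrix (Fin n) (Fin n) ℂ)
    (hH : H.IsHermitian) (𝓔 : Set ℝ)
    (hspec : ∀ k : Fin n, hH.eigenvalues k ∈ 𝓔)
    (f : ℝ → ℂ) (i j : Fin n) (m : ℕ)
    (hd : ∀ w : (matGraph H).Walk i j, m ≤ w.length)
    (p : Polynomial ℂ) (hp : p.natDegree < m)
    (C : ℝ) (hC : ∀ x ∈ 𝓔, ‖f x - p.eval (x : ℂ)‖ ≤ C) :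
    ‖((hH.eigenvectorUnitary : Matrix (Fin n) (Fin n) ℂ) *
        Matrix.diagonal (fun k => f (hH.eigenvalues k)) *
        star (hH.eigenvectorUnitary : Matrix (Fin n) (Fin n) ℂ)) i j‖ ≤ C := by
  set U := hH.eigenvectorUnitary
  have hsplit : (U : Matrix (Fin n) (Fin n) ℂ) * diagonal (fun k => f (hH.eigenvalues k)) *
      star (U : Matrix (Fin n) (Fin n) ℂ) =
      Unitary.conjStarAlgAut ℂ _ U
        (diagonal fun k => f (hH.eigenvalues k) - p.eval (hH.eigenvalues k : ℂ)) +
      Polynomial.aeval H p := by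
    rw [hH.aeval_eq_conjStarAlgAut, ← map_add, diagonal_add, Unitary.conjStarAlgAut_apply]
    simp only [Complex.coe_algebraMap, sub_add_cancel]
  rw [hsplit, Matrix.add_apply, matGraph.aeval_apply_eq_zero_of_natDegree_lt hd hp, add_zero]
  exact Unitary.norm_conjStarAlgAut_diagonal_apply_le U (fun k => hC _ (hspec k)) i j

/-- Entrywise bound on matrix functions via polynomial
approximation: if `H` is Hermitian with all eigenvalues in `𝓔`, `f : ℝ → ℂ`, and
the graph distance from `i` to `j` is at least `m`, then for every polynomial
`p` of degree ≤ `m − 1` and every uniform bound `C` on `|f − p|` over `𝓔`, the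
entry of `f(H) = U diag(f(λ)) U*` satisfies `|f(H)(i,j)| ≤ C`. -/
theorem matrix_function_entry_bound {n : ℕ} (H : Matrix (Fin n) (Fin n) ℂ)
    (hH : H.IsHermitian) (𝓔 : Set ℝ) (hE : IsCompact 𝓔)
    (hspec : ∀ k : Fin n, hH.eigenvalues k ∈ 𝓔)
    (f : ℝ → ℂ) (i j : Fin n) (m : ℕ)
    (hd : ∀ w : (matGraph H).Walk i j, m ≤ w.length)
    (p : Polynomial ℂ) (hp : p.natDegree < m)
    (C : ℝ) (hC : ∀ x ∈ 𝓔, ‖f x - p.eval (x : ℂ)‖ ≤ C) :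
    ‖((hH.eigenvectorUnitary : Matrix (Fin n) (Fin n) ℂ) *
        Matrix.diagonal (fun k => f (hH.eigenvalues k)) *
        star (hH.eigenvectorUnitary : Matrix (Fin n) (Fin n) ℂ)) i j‖ ≤ C :=
  matrix_function_entry_bound_general H hH 𝓔 hspec f i j m hd p hp C hC
end

section
/- Let A be symmetric with all leading principal submatrices invertible and suppose the spectra of all leading principal submatrices of a Hermitian matrix H are contained in a compact set 𝓔 ⊂ ℝ, and let z ∉ 𝓔, A = H − zI with LDLᵀ factorization A = L D Lᵀ. Then for each j, the diagonal entry satisfies |D(j,j)| ≥ dist(z, 𝓔), where dist(z, 𝓔) = min_{x ∈ 𝓔} |z − x|. Equivalently, D(j,j)^{-1} = (A({1,...,j},{1,...,j}))^{-1}(j,j) and the spectrum of A({1,...,j},{1,...,j}) lies in 𝓔 − z. -/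
/-! On the leading `(j+1) × (j+1)` block, lower triangularity of `L` gives
`A_j = L_j D_j L_jᵀ`; as `L_j⁻¹` fixes the last basis vector, `(A_j⁻¹)_{jj} = D(j,j)⁻¹`.
On the other hand `A_j = H_j - z` with `H_j` Hermitian and `σ(H_j) ⊆ 𝓔`, so the continuous
functional calculus bounds `‖A_j⁻¹‖₂` by `dist(z, 𝓔)⁻¹`, and every entry of a matrix is bounded
by its operator norm. -/

open Matrix

lemma Metric.notMem_of_infDist_pos {α : Type*} [PseudoMetricSpace α] {x : α} {s : Set α}
    (h : 0 < Metric.infDist x s) : x ∉ s :=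
  fun hx => h.ne' (Metric.infDist_zero_of_mem hx)

lemma norm_inverse_sub_algebraMap_le_inv_infDist {A : Type*} [CStarAlgebra A] {a : A}
    [IsStarNormal a] {E : Set ℂ} (hE : spectrum ℂ a ⊆ E) {z : ℂ}
    (hz : 0 < Metric.infDist z E) :
    ‖Ring.inverse (a - algebraMap ℂ A z)‖ ≤ (Metric.infDist z E)⁻¹ := by
  have hsub : ∀ x ∈ spectrum ℂ a, x - z ≠ 0 := fun x hx h =>
    Metric.notMem_of_infDist_pos hz (sub_eq_zero.mp h ▸ hE hx)
  -- rewrite the left side as `cfc (fun x => (x - z)⁻¹) a`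
  rw [← cfc_id' ℂ a, ← cfc_const z a, ← cfc_sub (fun x => x) (fun _ => z) a,
    ← cfc_inv (fun x => x - z) a hsub]
  refine norm_cfc_le (inv_nonneg.mpr hz.le) fun x hx => ?_
  rw [norm_inv, ← dist_eq_norm, dist_comm]
  exact inv_anti₀ hz (Metric.infDist_le_dist_of_mem (hE hx))

namespace Matrix

open scoped Matrix.Norms.L2Operator in
lemma norm_apply_le_l2_opNorm_s9 {𝕜 m n : Type*} [RCLike 𝕜] [Fintype m] [Fintype n]
    [DecidableEq n] (A : Matrix m n 𝕜) (i : m) (j : n) : ‖A i j‖ ≤ ‖A‖ := by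
  have h := A.l2_opNorm_mulVec (EuclideanSpace.single j 1)
  calc ‖A i j‖ = ‖(EuclideanSpace.equiv m 𝕜).symm (A *ᵥ EuclideanSpace.single j 1) i‖ := by
        simp [mulVec_single]
    _ ≤ ‖A‖ := by simpa using (PiLp.norm_apply_le _ i).trans h

open scoped Matrix.Norms.L2Operator in
lemma IsHermitian.norm_inv_sub_smul_one_apply_le {m : Type*} [Fintype m] [DecidableEq m]
    {M : Matrix m m ℂ} (hM : M.IsHermitian) {E : Set ℂ} (hE : spectrum ℂ M ⊆ E) {z : ℂ}
    (hz : 0 < Metric.infDist z E) (i j : m) :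
    ‖(M - z • 1)⁻¹ i j‖ ≤ (Metric.infDist z E)⁻¹ := by
  have : IsStarNormal M := hM.isSelfAdjoint.isStarNormal
  calc ‖(M - z • 1)⁻¹ i j‖ ≤ ‖(M - z • 1)⁻¹‖ := norm_apply_le_l2_opNorm_s9 _ i j
    _ ≤ (Metric.infDist z E)⁻¹ := by
      simpa only [nonsing_inv_eq_ringInverse, Algebra.algebraMap_eq_smul_one] using
        norm_inverse_sub_algebraMap_le_inv_infDist hE hz

lemma IsLowerTriangular.submatrix_of_strictMono {R ι ι' : Type*} [Zero R] [Preorder ι]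
    [Preorder ι'] {L : Matrix ι ι R} (hL : L.IsLowerTriangular) {f : ι' → ι}
    (hf : StrictMono f) : (L.submatrix f f).IsLowerTriangular :=
  fun _ _ h => hL (hf h)

section LeadingBlock

variable {R : Type*} {k n : ℕ}

lemma submatrix_castLE_mul_of_isLowerTriangular [NonUnitalNonAssocSemiring R] {ι ι' : Type*}
    (h : k ≤ n) {L : Matrix (Fin n) (Fin n) R} (hL : L.IsLowerTriangular)
    (B : Matrix (Fin n) ι R) (f : ι' → ι) :
    (L * B).submatrix (Fin.castLE h) f =
      L.submatrix (Fin.castLE h) (Fin.castLE h) * B.submatrix (Fin.castLE h) f := by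
  ext a b
  simp only [mul_apply, submatrix_apply]
  refine (Fintype.sum_of_injective _ (Fin.castLE_injective h) _ _ ?_ fun _ => rfl).symm
  intro p hp
  have hlt : OrderDual.toDual p < OrderDual.toDual (Fin.castLE h a) := by
    by_contra! hle
    exact hp ⟨⟨p, lt_of_le_of_lt hle a.isLt⟩, rfl⟩
  rw [hL hlt, zero_mul]

lemma submatrix_castLE_mul_mul_transpose_of_isLowerTriangular [CommSemiring R] (h : k ≤ n)
    {L : Matrix (Fin n) (Fin n) R} (hL : L.IsLowerTriangular) (M : Matrix (Fin n) (Fin n) R) :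
    (L * M * Lᵀ).submatrix (Fin.castLE h) (Fin.castLE h) =
      L.submatrix (Fin.castLE h) (Fin.castLE h) * M.submatrix (Fin.castLE h) (Fin.castLE h) *
        (L.submatrix (Fin.castLE h) (Fin.castLE h))ᵀ := by
  rw [Matrix.mul_assoc, submatrix_castLE_mul_of_isLowerTriangular h hL, Matrix.mul_assoc]
  congr 1
  rw [← transpose_transpose (M * Lᵀ), ← transpose_submatrix, transpose_mul, transpose_transpose,
    submatrix_castLE_mul_of_isLowerTriangular h hL, transpose_mul, transpose_submatrix,
    transpose_submatrix, transpose_transpose]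

end LeadingBlock

lemma IsLowerTriangular.det_eq_one {R ι : Type*} [CommRing R] [Fintype ι] [DecidableEq ι]
    [LinearOrder ι] {L : Matrix ι ι R} (hL : L.IsLowerTriangular) (hL1 : ∀ i, L i i = 1) :
    L.det = 1 := by
  simp [det_of_isLowerTriangular L hL, hL1]

lemma det_mul_diagonal_mul_transpose_of_unitriangular {R ι : Type*} [CommRing R] [Fintype ι]
    [DecidableEq ι] [LinearOrder ι] {L : Matrix ι ι R} (hL : L.IsLowerTriangular)
    (hL1 : ∀ i, L i i = 1) (d : ι → R) : (L * diagonal d * Lᵀ).det = ∏ i, d i := by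
  rw [det_mul, det_mul, det_transpose, hL.det_eq_one hL1, det_diagonal, one_mul, mul_one]

lemma ne_zero_of_isUnit_mul_diagonal_mul_transpose {K ι : Type*} [Field K] [Fintype ι]
    [DecidableEq ι] [LinearOrder ι] {L : Matrix ι ι K} (hL : L.IsLowerTriangular)
    (hL1 : ∀ i, L i i = 1) {d : ι → K} (h : IsUnit (L * diagonal d * Lᵀ)) (i : ι) : d i ≠ 0 := by
  have hdet := (isUnit_iff_isUnit_det _).mp h
  rw [det_mul_diagonal_mul_transpose_of_unitriangular hL hL1, isUnit_iff_ne_zero,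
    Finset.prod_ne_zero_iff] at hdet
  exact hdet i (Finset.mem_univ i)

section Unitriangular

variable {K : Type*} [Field K] {m : ℕ} {L : Matrix (Fin (m + 1)) (Fin (m + 1)) K}

lemma inv_mulVec_single_last_of_unitriangular (hL : L.IsLowerTriangular)
    (hL1 : ∀ i, L i i = 1) :
    L⁻¹ *ᵥ Pi.single (Fin.last m) 1 = Pi.single (Fin.last m) 1 := by
  have hfix : L *ᵥ Pi.single (Fin.last m) 1 = Pi.single (Fin.last m) 1 := by
    ext p
    rcases (Fin.le_last p).lt_or_eq with hp | rfl
    · simp [mulVec_single, hL (show OrderDual.toDual (Fin.last m) < OrderDual.toDual p from hp),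
        hp.ne]
    · simp [mulVec_single, hL1]
  have hunit : IsUnit L.det := hL.det_eq_one hL1 ▸ isUnit_one
  conv_lhs => rw [← hfix, mulVec_mulVec, nonsing_inv_mul L hunit, one_mulVec]

lemma inv_mul_diagonal_mul_transpose_apply_last (hL : L.IsLowerTriangular)
    (hL1 : ∀ i, L i i = 1) {d : Fin (m + 1) → K} (hd : ∀ i, d i ≠ 0) :
    (L * diagonal d * Lᵀ)⁻¹ (Fin.last m) (Fin.last m) = (d (Fin.last m))⁻¹ := by
  have hcol : ∀ p, L⁻¹ p (Fin.last m) = (Pi.single (Fin.last m) (1 : K) : Fin (m + 1) → K) p :=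
    fun p => by
      simpa [mulVec_single] using congrFun (inv_mulVec_single_last_of_unitriangular hL hL1) p
  have hdinv : (diagonal d)⁻¹ = diagonal fun i => (d i)⁻¹ :=
    inv_eq_right_inv (by simp [diagonal_mul_diagonal, hd])
  rw [Matrix.mul_inv_rev, Matrix.mul_inv_rev, ← transpose_nonsing_inv, hdinv]
  simp [mul_apply, hcol, Pi.single_apply]

end Unitriangular

end Matrix

theorem ldlt_pivot_lower_bound_general {n : ℕ} (H : Matrix (Fin n) (Fin n) ℂ)
    (hH : H.IsHermitian) (𝓔 : Set ℝ)
    (hspec : ∀ i : Fin n,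
      spectrum ℂ (H.submatrix (Fin.castLE i.isLt) (Fin.castLE i.isLt)) ⊆
        Complex.ofReal '' 𝓔)
    (z : ℂ)
    (A L D : Matrix (Fin n) (Fin n) ℂ)
    (hA : A = H - z • (1 : Matrix (Fin n) (Fin n) ℂ))
    (hL_lower : ∀ i j : Fin n, i < j → L i j = 0)
    (hL_diag : ∀ i : Fin n, L i i = 1)
    (hD_diag : ∀ i j : Fin n, i ≠ j → D i j = 0)
    (hfact : A = L * D * Lᵀ) :
    ∀ j : Fin n, Metric.infDist z (Complex.ofReal '' 𝓔) ≤ ‖D j j‖ := by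
  intro j
  rcases (Metric.infDist_nonneg (x := z) (s := Complex.ofReal '' 𝓔)).eq_or_lt with h0 | hpos
  · exact h0 ▸ norm_nonneg _
  set e := Fin.castLE j.isLt
  have hL : L.IsLowerTriangular := fun a b h => hL_lower a b h
  have hLj : (L.submatrix e e).IsLowerTriangular :=
    hL.submatrix_of_strictMono (Fin.strictMono_castLE _)
  have he : e (Fin.last j) = j := Fin.ext rfl
  have hAj : A.submatrix e e = H.submatrix e e - z • 1 := by
    simp only [hA, submatrix_sub, submatrix_smul, Pi.sub_apply, Pi.smul_apply,
      submatrix_one e (Fin.castLE_injective _)]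
  have hLDLj : A.submatrix e e =
      L.submatrix e e * diagonal (fun c => D (e c) (e c)) * (L.submatrix e e)ᵀ := by
    rw [hfact, submatrix_castLE_mul_mul_transpose_of_isLowerTriangular _ hL,
      ((show D.IsDiag from hD_diag).submatrix (Fin.castLE_injective _)).diagonal_diag.symm]
    rfl
  have hunit : IsUnit (A.submatrix e e) := by
    rw [hAj, ← neg_sub, ← Algebra.algebraMap_eq_smul_one]
    exact (spectrum.notMem_iff.mp fun h => Metric.notMem_of_infDist_pos hpos (hspec j h)).neg
  have hpivots : ∀ c, D (e c) (e c) ≠ 0 :=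
    ne_zero_of_isUnit_mul_diagonal_mul_transpose hLj (fun _ => hL_diag _) (hLDLj ▸ hunit)
  have hbound := (hH.submatrix e).norm_inv_sub_smul_one_apply_le (hspec j) hpos
    (Fin.last j) (Fin.last j)
  rw [← hAj, hLDLj, inv_mul_diagonal_mul_transpose_apply_last hLj (fun _ => hL_diag _)
    hpivots, he, norm_inv] at hbound
  exact (inv_le_inv₀ (norm_pos_iff.mpr (he ▸ hpivots _)) hpos).mp hbound

/-- If the spectra of all leading principal submatrices of a
Hermitian matrix `H` lie in a compact set `𝓔 ⊂ ℝ` and `z ∉ 𝓔`, then the diagonal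
pivots of the LDLᵀ factorization of `A = H − zI` satisfy
`|D(j,j)| ≥ dist(z, 𝓔)`. -/
theorem ldlt_pivot_lower_bound {n : ℕ} (H : Matrix (Fin n) (Fin n) ℂ)
    (hH : H.IsHermitian) (𝓔 : Set ℝ) (hcompact : IsCompact 𝓔)
    (hspec : ∀ i : Fin n,
      spectrum ℂ (H.submatrix (Fin.castLE i.isLt) (Fin.castLE i.isLt)) ⊆
        Complex.ofReal '' 𝓔)
    (z : ℂ) (hz : z ∉ Complex.ofReal '' 𝓔)
    (A L D : Matrix (Fin n) (Fin n) ℂ)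
    (hA : A = H - z • (1 : Matrix (Fin n) (Fin n) ℂ))
    (hL_lower : ∀ i j : Fin n, i < j → L i j = 0)
    (hL_diag : ∀ i : Fin n, L i i = 1)
    (hD_diag : ∀ i j : Fin n, i ≠ j → D i j = 0)
    (hfact : A = L * D * Lᵀ) :
    ∀ j : Fin n, Metric.infDist z (Complex.ofReal '' 𝓔) ≤ ‖D j j‖ :=
  ldlt_pivot_lower_bound_general H hH 𝓔 hspec z A L D hA hL_lower hL_diag hD_diag hfact
end

section
/- Let à = L̃ D̃ L̃ᵀ denote the output of the incomplete LDLᵀ factorization algorithm applied to a symmetric matrix A with a prescribed sparsity pattern, where at each step j the entries L(i,j) with (i,j) outside the pattern are dropped and recorded in a matrix E via E(i,j) = L̃(i,ℓ) D̃(ℓ,ℓ) L̃ᵀ(ℓ,j) for dropped positions (i,j), E symmetric, E zero elsewhere. Then L̃ D̃ L̃ᵀ = A + E, i.e., the incomplete factorization is the exact LDLᵀ factorization of the perturbed matrix A + E. -/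
open Matrix BigOperators Finset

/-- The incomplete LDLᵀ factorization with prescribed sparsity
pattern `S`, dropping entries into the symmetric matrix `E`, is the exact LDLᵀ
factorization of the perturbed matrix `A + E`: namely `L̃ D̃ L̃ᵀ = A + E`. -/
theorem incomplete_ldlt_eq_perturbed {n : ℕ}
    (A Lt Dt E : Matrix (Fin n) (Fin n) ℂ)
    (S : Fin n → Fin n → Prop)
    (hsymmA : A.IsSymm)
    (hS_diag : ∀ j : Fin n, S j j)
    (hS_nz : ∀ i j : Fin n, j < i → A i j ≠ 0 → S i j)
    (hL_lower : ∀ i j : Fin n, i < j → Lt i j = 0)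
    (hL_diag : ∀ j : Fin n, Lt j j = 1)
    (hD_diag : ∀ i j : Fin n, i ≠ j → Dt i j = 0)
    (hD_nz : ∀ j : Fin n, Dt j j ≠ 0)
    (hD_rec : ∀ j : Fin n,
      Dt j j = A j j - ∑ k ∈ Finset.univ.filter (fun k : Fin n => k < j),
        Lt j k * Dt k k * Lt j k)
    (hL_rec : ∀ i j : Fin n, j < i → S i j →
      Lt i j * Dt j j = A i j -
        ∑ k ∈ Finset.univ.filter (fun k : Fin n => k < j),
          Lt i k * Dt k k * Lt j k)
    (hE_kept : ∀ i j : Fin n, j < i → S i j → E i j = 0)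
    (hL_drop : ∀ i j : Fin n, j < i → ¬ S i j → Lt i j = 0)
    (hE_drop : ∀ i j : Fin n, j < i → ¬ S i j →
      E i j = ∑ k ∈ Finset.univ.filter (fun k : Fin n => k < j),
        Lt i k * Dt k k * Lt j k)
    (hE_diag : ∀ j : Fin n, E j j = 0)
    (hE_symm : E.IsSymm) :
    Lt * Dt * Ltᵀ = A + E := by

  have hLD : ∀ i k : Fin n, (Lt * Dt) i k = Lt i k * Dt k k := by
    intro i k
    rw [Matrix.mul_apply]
    exact Finset.sum_eq_single k (fun l _ hl => by rw [hD_diag l k hl, mul_zero])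
      (by simp)
  have hsum : ∀ i j : Fin n, (Lt * Dt * Ltᵀ) i j = ∑ k, Lt i k * Dt k k * Lt j k := by
    intro i j
    rw [Matrix.mul_apply]
    exact Finset.sum_congr rfl (fun k _ => by rw [hLD, Matrix.transpose_apply])
  have hsplit : ∀ i j : Fin n, j ≤ i →
      ∑ k, Lt i k * Dt k k * Lt j k =
      (∑ k ∈ Finset.univ.filter (fun k : Fin n => k < j), Lt i k * Dt k k * Lt j k)
        + Lt i j * Dt j j := by
    intro i j hij
    rw [← Finset.sum_filter_add_sum_filter_not Finset.univ (fun k : Fin n => k < j)]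
    congr 1
    rw [Finset.sum_eq_single j]
    · rw [hL_diag j, mul_one]
    · intro k hk hkj
      simp only [Finset.mem_filter, Finset.mem_univ, true_and, not_lt] at hk
      rw [hL_lower j k (lt_of_le_of_ne hk (Ne.symm hkj)), mul_zero]
    · simp
  have key : ∀ i j : Fin n, j ≤ i →
      ∑ k, Lt i k * Dt k k * Lt j k = A i j + E i j := by
    intro i j hij
    rw [hsplit i j hij]
    rcases eq_or_lt_of_le hij with heq | hlt
    · subst heq
      rw [hD_rec j, hE_diag j, hL_diag j, one_mul]
      ring
    · by_cases hS : S i j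
      · rw [hL_rec i j hlt hS, hE_kept i j hlt hS]
        ring
      · have hA : A i j = 0 := by
          by_contra h
          exact hS (hS_nz i j hlt h)
        rw [hL_drop i j hlt hS, hE_drop i j hlt hS, hA]
        ring
  ext i j
  rw [Matrix.add_apply, hsum]
  rcases le_total j i with h | h
  · exact key i j h
  · have : ∑ k, Lt i k * Dt k k * Lt j k = ∑ k, Lt j k * Dt k k * Lt i k := by
      exact Finset.sum_congr rfl (fun k _ => by ring)
    rw [this, key j i h, hsymmA.apply i j, hE_symm.apply i j]
end

section
/- Define the level-of-fill level(i,j) := max{0, d_fill(i,j) − 1}, where d_fill(i,j) is the minimal number of edges on any fill path between i and j in the graph of a symmetric matrix H. Suppose in the incomplete factorization with pattern ifnz = {(i,j) ∈ fnz(H) : level(i,j) ≤ c}, a dropped entry E(i,j) ≠ 0 occurs only when (i,j) ∈ fnz(H)\ifnz(H) and there exists k < j with (i,k) ∈ ifnz(H) and (j,k) ∈ ifnz(H). Then every nonzero entry of E satisfies c < level(i,j) ≤ 2c + 1. -/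
open Matrix

/-- `(i,j)` belongs to the truncated fill pattern `ifnz`: connected by a fill
path of level-of-fill at most `c`. -/
def Ifnz {n : ℕ} (H : Matrix (Fin n) (Fin n) ℂ) (c : ℕ) (i j : Fin n) : Prop :=
  ∃ l, IsFillPath H i j l ∧ l.length ≤ c


section FillPath

variable {n : ℕ} {H : Matrix (Fin n) (Fin n) ℂ} {i j k : Fin n} {l l₁ l₂ : List (Fin n)}

namespace IsFillPath

theorem trans (h₁ : IsFillPath H i k l₁) (h₂ : IsFillPath H k j l₂) (hk : k < min i j) :
    IsFillPath H i j (l₁ ++ k :: l₂) := by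
  refine ⟨?_, fun v hv => ?_⟩
  · rw [List.Chain', List.append_cons l₁ k l₂, List.append_assoc, List.append_assoc,
      List.singleton_append, List.isChain_cons_split]
    exact ⟨h₁.1, h₂.1⟩
  · simp only [List.mem_append, List.mem_cons] at hv
    rcases hv with hv | rfl | hv
    · exact (h₁.2 v hv).trans_le (min_le_right i k) |>.trans hk
    · exact hk
    · exact (h₂.2 v hv).trans_le (min_le_left k j) |>.trans hk

end IsFillPath

theorem Ifnz.symm (hH : H.IsSymm) {c : ℕ} (h : Ifnz H c i j) : Ifnz H c j i :=
  let ⟨l, hl, hlen⟩ := h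
  ⟨l.reverse, hl.symm hH, (List.length_reverse).trans_le hlen⟩

/-- Levels add up plus one, since the pivot `k` becomes an interior vertex. -/
theorem Ifnz.trans {c c' : ℕ} (h₁ : Ifnz H c i k) (h₂ : Ifnz H c' k j) (hk : k < min i j) :
    Ifnz H (c + c' + 1) i j :=
  let ⟨l₁, hl₁, hlen₁⟩ := h₁
  let ⟨l₂, hl₂, hlen₂⟩ := h₂
  ⟨l₁ ++ k :: l₂, hl₁.trans hl₂ hk, by simp only [List.length_append, List.length_cons]; omega⟩

end FillPath

/-- Every dropped entry `E(i,j) ≠ 0` of the incomplete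
factorization with pattern `level ≤ c` satisfies `c < level(i,j) ≤ 2c + 1`:
it is a fill-in position of level greater than `c`, but admits a fill path of
level at most `2c + 1`. -/
theorem dropped_entry_level_bounds {n : ℕ} (H : Matrix (Fin n) (Fin n) ℂ)
    (hsymm : H.IsSymm) (c : ℕ) (E : Matrix (Fin n) (Fin n) ℂ)
    (hdrop : ∀ i j : Fin n, E i j ≠ 0 →
      j < i ∧ (∃ l, IsFillPath H i j l) ∧ ¬ Ifnz H c i j ∧
        ∃ k : Fin n, k < j ∧ Ifnz H c i k ∧ Ifnz H c j k) :
    ∀ i j : Fin n, E i j ≠ 0 →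
      (¬ Ifnz H c i j) ∧ ∃ l, IsFillPath H i j l ∧ l.length ≤ 2 * c + 1 := by
  intro i j hE
  obtain ⟨hji, -, hnot, k, hkj, hik, hjk⟩ := hdrop i j hE
  rw [two_mul]
  exact ⟨hnot, hik.trans (hjk.symm hsymm) (lt_min (hkj.trans hji) hkj)⟩
end
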